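/- There is no Weyl-like element for the lattice Γ^{2,2}: for every ρ ∈ ℤ⁴ there exists a lattice root α ∈ ℤ⁴ (i.e. α = (k,l,m,n) with kl + mn = -1) such that B(ρ,α) = 0. -/

import Mathlib

/-- The bilinear form of the even self-dual lattice `Γ^{2,2}`:
`B(x,y) = -(x₁y₂ + x₂y₁) - (x₃y₄ + x₄y₃)`. -/
def GammaB (x y : Fin 4 → ℤ) : ℤ :=
  -(x 0 * y 1 + x 1 * y 0) - (x 2 * y 3 + x 3 * y 2)

/-- A lattice root of `Γ^{2,2}`: an element `(k,l,m,n)` with `kl + mn = -1`,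
equivalently of norm `B(α,α) = 2`. -/
def IsLatticeRoot (α : Fin 4 → ℤ) : Prop :=
  α 0 * α 1 + α 2 * α 3 = -1

/-!
Identify `Γ^{2,2}` with `M₂(ℤ)` via `(k, l, m, n) ↦ [[k, m], [-n, l]]`. The norm becomes `-2 det`,
so `B(x, y) = det x + det y - det (x + y)` and the roots are the matrices of determinant `-1`.
Everything is invariant under `X ↦ P X Q` with `P, Q ∈ SL₂(ℤ)`, and by the Euclidean algorithm
(Smith normal form) every integer matrix is equivalent to a diagonal one in this way; a diagonal
matrix is orthogonal to the root `[[0, 1], [1, 0]]`.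
-/

open Matrix MatrixGroups

namespace Matrix

section CommRing

variable {A : Type*} [CommRing A]

def HasOrthogonalRoot (R : Matrix (Fin 2) (Fin 2) A) : Prop :=
  ∃ X : Matrix (Fin 2) (Fin 2) A, X.det = -1 ∧ (R + X).det = R.det + X.det

theorem HasOrthogonalRoot.mul_mul {R : Matrix (Fin 2) (Fin 2) A} (h : HasOrthogonalRoot R)
    (P Q : SL(2, A)) :
    HasOrthogonalRoot ((P : Matrix (Fin 2) (Fin 2) A) * R * (Q : Matrix (Fin 2) (Fin 2) A)) := by
  obtain ⟨X, hX, horth⟩ := h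
  refine ⟨P * X * Q, by simp [hX], ?_⟩
  rw [← add_mul, ← mul_add]
  simp [horth]

theorem hasOrthogonalRoot_mul_mul_iff (R : Matrix (Fin 2) (Fin 2) A) (P Q : SL(2, A)) :
    HasOrthogonalRoot ((P : Matrix (Fin 2) (Fin 2) A) * R * (Q : Matrix (Fin 2) (Fin 2) A)) ↔
      HasOrthogonalRoot R := by
  refine ⟨fun h => ?_, fun h => h.mul_mul P Q⟩
  simpa [mul_assoc, mul_adjugate, ← mul_assoc (adjugate _), adjugate_mul] using h.mul_mul P⁻¹ Q⁻¹

theorem hasOrthogonalRoot_diagonal (d : Fin 2 → A) : HasOrthogonalRoot (diagonal d) :=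
  ⟨!![0, 1; 1, 0], by simp [det_fin_two_of], by
    simp [diagonal_fin_two, det_fin_two_of]; ring⟩

end CommRing

theorem exists_SL2_mul_eq_gcd (R : Matrix (Fin 2) (Fin 2) ℤ) (h : 0 < Int.gcd (R 0 0) (R 1 0)) :
    ∃ g : SL(2, ℤ), ((g : Matrix (Fin 2) (Fin 2) ℤ) * R) 0 0 = Int.gcd (R 0 0) (R 1 0) ∧
      ((g : Matrix (Fin 2) (Fin 2) ℤ) * R) 1 0 = 0 := by
  obtain ⟨a, c, hac, ha, hc⟩ := Int.exists_gcd_one h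
  set G : ℤ := (Int.gcd (R 0 0) (R 1 0) : ℤ)
  obtain ⟨g, hg0, hg1⟩ :=
    (Int.isCoprime_iff_gcd_eq_one.mpr hac).symm.neg_left.exists_SL2_row 1
  have hdet : g 0 0 * a + g 0 1 * c = 1 := by
    have := g.det_coe
    rw [det_fin_two, hg0, hg1] at this
    linear_combination this
  refine ⟨g, ?_, ?_⟩
  · simp only [mul_apply, Fin.sum_univ_two, ha, hc]
    linear_combination G * hdet
  · simp only [mul_apply, Fin.sum_univ_two, ha, hc, hg0, hg1]
    ring

theorem exists_mul_SL2_eq_gcd (R : Matrix (Fin 2) (Fin 2) ℤ) (h : 0 < Int.gcd (R 0 0) (R 0 1)) :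
    ∃ g : SL(2, ℤ), (R * (g : Matrix (Fin 2) (Fin 2) ℤ)) 0 0 = Int.gcd (R 0 0) (R 0 1) ∧
      (R * (g : Matrix (Fin 2) (Fin 2) ℤ)) 0 1 = 0 := by
  obtain ⟨g, hg⟩ := exists_SL2_mul_eq_gcd Rᵀ h
  refine ⟨g.transpose, ?_⟩
  rw [SpecialLinearGroup.coe_transpose, ← transpose_transpose R, ← transpose_mul]
  simpa using hg

theorem exists_SL2_mul_mul_eq_diagonal_of_gcd_pos (R : Matrix (Fin 2) (Fin 2) ℤ)
    (h : 0 < Int.gcd (R 0 0) (R 1 0)) :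
    ∃ P Q : SL(2, ℤ), ∃ d : Fin 2 → ℤ,
      (P : Matrix (Fin 2) (Fin 2) ℤ) * R * (Q : Matrix (Fin 2) (Fin 2) ℤ) = diagonal d := by
  induction hn : Int.gcd (R 0 0) (R 1 0) using Nat.strong_induction_on generalizing R with
  | _ n ih =>
  obtain ⟨g, hg0, hg1⟩ := exists_SL2_mul_eq_gcd R h
  set R₁ := (g : Matrix (Fin 2) (Fin 2) ℤ) * R with hR₁
  clear_value R₁
  rw [hn] at hg0
  by_cases hdvd : R₁ 0 0 ∣ R₁ 0 1
  · obtain ⟨k, hk⟩ := hdvd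
    refine ⟨g, ⟨!![1, -k; 0, 1], by simp [det_fin_two_of]⟩, ![R₁ 0 0, R₁ 1 1], ?_⟩
    rw [← hR₁]
    ext i j
    fin_cases i <;> fin_cases j <;> simp [mul_apply, Fin.sum_univ_two, hk, hg1]
  · -- the corner becomes a proper divisor of `n`, so the induction measure drops
    have hpos : 0 < Int.gcd (R₁ 0 0) (R₁ 0 1) := Int.gcd_pos_iff.mpr (Or.inl (by omega))
    obtain ⟨q, hq0, hq1⟩ := exists_mul_SL2_eq_gcd R₁ hpos
    set R₂ := R₁ * (q : Matrix (Fin 2) (Fin 2) ℤ)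
    have hlt : Int.gcd (R₁ 0 0) (R₁ 0 1) < n := by
      have hle : Int.gcd (R₁ 0 0) (R₁ 0 1) ≤ n := by
        have := Int.gcd_le_left (R₁ 0 1) (by omega : 0 < R₁ 0 0)
        omega
      refine lt_of_le_of_ne hle fun heq => hdvd ?_
      rw [hg0, ← heq]
      exact Int.gcd_dvd_right _ _
    have hpos₂ : 0 < Int.gcd (R₂ 0 0) (R₂ 1 0) := Int.gcd_pos_iff.mpr (Or.inl (by omega))
    have hle₂ : Int.gcd (R₂ 0 0) (R₂ 1 0) ≤ Int.gcd (R₁ 0 0) (R₁ 0 1) := by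
      have := Int.gcd_le_left (R₂ 1 0) (by omega : 0 < R₂ 0 0)
      omega
    obtain ⟨P, Q, d, hPQ⟩ := ih _ (by omega) R₂ hpos₂ rfl
    refine ⟨P * g, q * Q, d, ?_⟩
    simpa [R₂, hR₁, mul_assoc] using hPQ

theorem exists_SL2_mul_mul_eq_diagonal (R : Matrix (Fin 2) (Fin 2) ℤ) :
    ∃ P Q : SL(2, ℤ), ∃ d : Fin 2 → ℤ,
      (P : Matrix (Fin 2) (Fin 2) ℤ) * R * (Q : Matrix (Fin 2) (Fin 2) ℤ) = diagonal d := by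
  by_cases h₀ : 0 < Int.gcd (R 0 0) (R 1 0)
  · exact exists_SL2_mul_mul_eq_diagonal_of_gcd_pos R h₀
  let S : SL(2, ℤ) := ⟨!![0, -1; 1, 0], by simp [det_fin_two_of]⟩
  by_cases h₁ : 0 < Int.gcd (R 0 1) (R 1 1)
  · obtain ⟨P, Q, d, hPQ⟩ := exists_SL2_mul_mul_eq_diagonal_of_gcd_pos (R * S)
      (by simpa [S, mul_apply, Fin.sum_univ_two] using h₁)
    exact ⟨P, S * Q, d, by simpa [mul_assoc] using hPQ⟩
  · simp only [Int.gcd_pos_iff, not_or, not_not] at h₀ h₁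
    refine ⟨1, 1, 0, ?_⟩
    ext i j
    fin_cases i <;> fin_cases j <;> simp [h₀, h₁]

theorem hasOrthogonalRoot_int (R : Matrix (Fin 2) (Fin 2) ℤ) : HasOrthogonalRoot R := by
  obtain ⟨P, Q, d, h⟩ := exists_SL2_mul_mul_eq_diagonal R
  rw [← hasOrthogonalRoot_mul_mul_iff R P Q, h]
  exact hasOrthogonalRoot_diagonal d

end Matrix

def gammaMatrix (x : Fin 4 → ℤ) : Matrix (Fin 2) (Fin 2) ℤ :=
  !![x 0, x 2; -x 3, x 1]

theorem gammaMatrix_surjective : Function.Surjective gammaMatrix := fun X =>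
  ⟨![X 0 0, X 1 1, X 0 1, -X 1 0], by
    ext i j
    fin_cases i <;> fin_cases j <;> simp [gammaMatrix]⟩

theorem isLatticeRoot_iff_det_gammaMatrix {α : Fin 4 → ℤ} :
    IsLatticeRoot α ↔ (gammaMatrix α).det = -1 := by
  rw [IsLatticeRoot, gammaMatrix, det_fin_two_of, mul_neg, sub_neg_eq_add]

theorem gammaB_eq_det (x y : Fin 4 → ℤ) :
    GammaB x y =
      (gammaMatrix x).det + (gammaMatrix y).det - (gammaMatrix x + gammaMatrix y).det := by
  simp only [GammaB, gammaMatrix, det_fin_two, Matrix.add_apply, of_apply, cons_val',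
    cons_val_zero, cons_val_one, empty_val', cons_val_fin_one]
  ring

theorem no_weyl_like_element (ρ : Fin 4 → ℤ) :
    ∃ α : Fin 4 → ℤ, IsLatticeRoot α ∧ GammaB ρ α = 0 := by
  obtain ⟨X, hdet, horth⟩ := hasOrthogonalRoot_int (gammaMatrix ρ)
  obtain ⟨α, rfl⟩ := gammaMatrix_surjective X
  refine ⟨α, isLatticeRoot_iff_det_gammaMatrix.mpr hdet, ?_⟩
  rw [gammaB_eq_det, horth]
  ring
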